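/- For every integer n ≥ 26, the polynomial D_n(t) = t^9 - (n+3)t^8 - (n-4)t^7 + (2n-8)t^6 + (2n+8)t^5 + (2n-8)t^4 - (2n-11)t^3 + (3n-5)t^2 + (3n+4)t - 4(n+1) has exactly two distinct negative real roots. -/

import Mathlib

/-!
Write `D_n = P + n Q`. Since `P < 0` on `(-∞, 0]`, a negative root of `D_n` has `Q > 0`, which
confines it to `(-2, -1)`. At a root, `Q · D_n' = W(Q, P)` (the Wronskian), so the sign of `D_n'`
there is that of `W(Q, P)`: positive on `[-2, -4/3]` and negative on `[-5/4, -1]`. In between,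
`D_n ≥ D_26 > 0`. Hence each of `(-2, -4/3)` and `(-5/4, -1)` contains at most one root, and
exactly one by the intermediate value theorem, as `D_n < 0` at `-2` and `-1`, where `Q ≤ 0`.

The sign conditions on compact intervals `[a, b]` are certified by homogenizing and substituting
`t = (a v + b u) / (u + v)`: all coefficients of the resulting binary form (the Bernstein
coefficients) have the required sign.
-/

open Polynomial

/-- The denominator polynomial `D_n(t)`, over `ℝ`. -/
noncomputable def Dpoly (n : ℕ) : Polynomial ℝ :=
  X ^ 9 - C ((n : ℝ) + 3) * X ^ 8 - C ((n : ℝ) - 4) * X ^ 7 + C (2 * (n : ℝ) - 8) * X ^ 6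
    + C (2 * (n : ℝ) + 8) * X ^ 5 + C (2 * (n : ℝ) - 8) * X ^ 4 - C (2 * (n : ℝ) - 11) * X ^ 3
    + C (3 * (n : ℝ) - 5) * X ^ 2 + C (3 * (n : ℝ) + 4) * X - C (4 * ((n : ℝ) + 1))

open Set Topology

theorem Set.OrdConnected.subsingleton_zeros_of_deriv_pos {f : ℝ → ℝ} {s : Set ℝ}
    (hs : s.OrdConnected) (hf : ContinuousOn f s) (hf' : ∀ x ∈ s, f x = 0 → 0 < deriv f x) :
    {x ∈ s | f x = 0}.Subsingleton := by
  have sign_near : ∀ c ∈ s, f c = 0 →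
      ∀ᶠ z in 𝓝 c, SignType.sign (f z) = SignType.sign (z - c) := fun c hc hfc =>
    eventually_nhdsWithin_sign_eq_of_deriv_pos (hf' c hc hfc) hfc
  intro x hx y hy
  by_contra hne
  wlog hxy : x < y generalizing x y
  · exact this hy hx (Ne.symm hne) (lt_of_le_of_ne (not_lt.1 hxy) (Ne.symm hne))
  obtain ⟨z, hfz, hz⟩ : ∃ z, SignType.sign (f z) = SignType.sign (z - y) ∧ z ∈ Ioo x y :=
    (((sign_near y hy.1 hy.2).filter_mono nhdsWithin_le_nhds).and (Ioo_mem_nhdsLT hxy)).exists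
  rw [sign_neg (sub_neg.2 hz.2), sign_eq_neg_one_iff] at hfz
  have hcont : ContinuousOn f (Icc x z) := hf.mono ((Icc_subset_Icc_right hz.2.le).trans
    (hs.out hx.1 hy.1))
  -- `c` is the last zero of `f` on `[x, z]`; just to its right `f > 0`, and `f z < 0`.
  obtain ⟨c, ⟨hcIcc, hfc⟩, hc_max⟩ := (isCompact_Icc.of_isClosed_subset
    (hcont.preimage_isClosed_of_isClosed isClosed_Icc isClosed_singleton)
    inter_subset_left).exists_isGreatest ⟨x, left_mem_Icc.2 hz.1.le, hx.2⟩
  have hcz : c < z := lt_of_le_of_ne hcIcc.2 (by rintro rfl; exact hfz.ne hfc)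
  have hcs : c ∈ s := hs.out hx.1 hy.1 ⟨hcIcc.1, hcIcc.2.trans hz.2.le⟩
  obtain ⟨w, hfw, hw⟩ : ∃ w, SignType.sign (f w) = SignType.sign (w - c) ∧ w ∈ Ioo c z :=
    (((sign_near c hcs hfc).filter_mono nhdsWithin_le_nhds).and (Ioo_mem_nhdsGT hcz)).exists
  rw [sign_pos (sub_pos.2 hw.1), sign_eq_one_iff] at hfw
  obtain ⟨v, hv, hfv⟩ := intermediate_value_Icc' hw.2.le
    (hcont.mono (Icc_subset_Icc_left (hcIcc.1.trans hw.1.le))) ⟨hfz.le, hfw.le⟩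
  have hvc : v ≤ c := hc_max ⟨⟨hcIcc.1.trans (hw.1.le.trans hv.1), hv.2⟩, hfv⟩
  linarith [hw.1, hv.1]

theorem Set.OrdConnected.subsingleton_zeros_of_deriv_neg {f : ℝ → ℝ} {s : Set ℝ}
    (hs : s.OrdConnected) (hf : ContinuousOn f s) (hf' : ∀ x ∈ s, f x = 0 → deriv f x < 0) :
    {x ∈ s | f x = 0}.Subsingleton := by
  have h := hs.subsingleton_zeros_of_deriv_pos (f := fun x => -f x) hf.neg fun x hx hfx => by
    rw [deriv.fun_neg, neg_pos]
    exact hf' x hx (neg_eq_zero.1 hfx)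
  simpa only [neg_eq_zero] using h

namespace Polynomial

theorem eval_mul_eval_derivative_of_isRoot {R : Type*} [CommRing R] {p q : R[X]} {t : R}
    (h : p.IsRoot t) : q.eval t * p.derivative.eval t = (wronskian q p).eval t := by
  simp only [wronskian, eval_sub, eval_mul, h.eq_zero, mul_zero, sub_zero]

variable {p : ℝ[X]} {d : ℕ} {a b : ℝ}

theorem eval_homogenize_barycentric (hd : p.natDegree ≤ d) (hab : a ≠ b) (t : ℝ) :
    MvPolynomial.eval ![a * (b - t) + b * (t - a), (t - a) + (b - t)] (p.homogenize d) =
      p.eval t * (b - a) ^ d := by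
  have hL : b - a ≠ 0 := sub_ne_zero.2 hab.symm
  rw [eval_homogenize hd _ (by simpa using hL)]
  simp only [Matrix.cons_val_zero, Matrix.cons_val_one, Matrix.cons_val_fin_one]
  rw [show (t - a) + (b - t) = b - a by ring,
    show (a * (b - t) + b * (t - a)) / (b - a) = t by field_simp; ring]

theorem eval_pos_of_homogenize_pos (hd : p.natDegree ≤ d) (hab : a < b)
    (h : ∀ u v : ℝ, 0 ≤ u → 0 ≤ v → 0 < u ∨ 0 < v →
      0 < MvPolynomial.eval ![a * v + b * u, u + v] (p.homogenize d))
    {t : ℝ} (ht : t ∈ Icc a b) : 0 < p.eval t := by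
  have hpos := h (t - a) (b - t) (sub_nonneg.2 ht.1) (sub_nonneg.2 ht.2) (by
    by_contra! h'
    linarith [h'.1, h'.2])
  rw [eval_homogenize_barycentric hd hab.ne] at hpos
  exact (mul_pos_iff_of_pos_right (pow_pos (sub_pos.2 hab) d)).1 hpos

theorem eval_nonneg_of_homogenize_nonneg (hd : p.natDegree ≤ d) (hab : a < b)
    (h : ∀ u v : ℝ, 0 ≤ u → 0 ≤ v →
      0 ≤ MvPolynomial.eval ![a * v + b * u, u + v] (p.homogenize d))
    {t : ℝ} (ht : t ∈ Icc a b) : 0 ≤ p.eval t := by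
  have hnonneg := h (t - a) (b - t) (sub_nonneg.2 ht.1) (sub_nonneg.2 ht.2)
  rw [eval_homogenize_barycentric hd hab.ne] at hnonneg
  exact (mul_nonneg_iff_of_pos_right (pow_pos (sub_pos.2 hab) d)).1 hnonneg

end Polynomial

namespace Dpoly

noncomputable def P : ℝ[X] :=
  X ^ 9 - 3 * X ^ 8 + 4 * X ^ 7 - 8 * X ^ 6 + 8 * X ^ 5 - 8 * X ^ 4 + 11 * X ^ 3 - 5 * X ^ 2
    + 4 * X - 4

noncomputable def Q : ℝ[X] :=
  -X ^ 8 - X ^ 7 + 2 * X ^ 6 + 2 * X ^ 5 + 2 * X ^ 4 - 2 * X ^ 3 + 3 * X ^ 2 + 3 * X - 4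

theorem eq_P_add_C_mul_Q (n : ℕ) : Dpoly n = P + C (n : ℝ) * Q := by
  simp only [Dpoly, P, Q, C_add, C_sub, C_mul, map_ofNat, C_1]
  ring

theorem eval_eq (n : ℕ) (t : ℝ) : (Dpoly n).eval t = P.eval t + n * Q.eval t := by
  simp only [eq_P_add_C_mul_Q, eval_add, eval_mul, eval_C]

theorem wronskian_Q_P : wronskian Q P =
    -X ^ 16 - 2 * X ^ 15 + 13 * X ^ 14 - 20 * X ^ 13 + 16 * X ^ 12 - 36 * X ^ 11 + 74 * X ^ 10
      - 48 * X ^ 9 - 22 * X ^ 8 + 28 * X ^ 7 - 204 * X ^ 6 + 276 * X ^ 5 - 193 * X ^ 4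
      + 242 * X ^ 3 - 183 * X ^ 2 + 64 * X - 4 := by
  simp only [wronskian, P, Q, derivative_add, derivative_sub, derivative_neg, derivative_mul,
    derivative_X_pow, Nat.cast_ofNat, map_ofNat, derivative_X, derivative_ofNat]
  ring

theorem wronskian_Q_eq (n : ℕ) : wronskian Q (Dpoly n) = wronskian Q P := by
  simp only [eq_P_add_C_mul_Q, wronskian, derivative_add, derivative_mul, derivative_C]
  ring

theorem eval_P_neg {t : ℝ} (ht : t ≤ 0) : P.eval t < 0 := by
  obtain ⟨u, hu, rfl⟩ : ∃ u : ℝ, 0 ≤ u ∧ t = -u := ⟨-t, by linarith, by ring⟩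
  rw [← neg_pos]
  simp only [P, eval_sub, eval_add, eval_mul, eval_pow, eval_X, eval_ofNat]
  ring_nf
  positivity

theorem eval_Q_neg {t : ℝ} (ht : t ≤ -2) : Q.eval t < 0 := by
  obtain ⟨u, hu, rfl⟩ : ∃ u : ℝ, 0 ≤ u ∧ t = -2 - u :=
    ⟨-2 - t, by linarith, by ring⟩
  rw [← neg_pos]
  simp only [Q, eval_sub, eval_add, eval_neg, eval_mul, eval_pow, eval_X, eval_ofNat]
  ring_nf
  positivity

theorem eval_Q_nonpos {t : ℝ} (ht : t ∈ Icc (-1) 0) : Q.eval t ≤ 0 := by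
  have h := eval_nonneg_of_homogenize_nonneg (p := -Q) (d := 8)
    (by unfold Q; compute_degree) (by norm_num) (fun u v hu hv => ?_) ht
  · simpa using h
  simp (disch := decide) only [Q, ← map_ofNat C,
    homogenize_add, homogenize_sub, homogenize_neg, homogenize_C_mul, homogenize_X_pow,
    homogenize_X, homogenize_C, map_add, map_sub, map_neg, map_mul, map_pow, MvPolynomial.eval_X,
    MvPolynomial.eval_C, Matrix.cons_val_zero, Matrix.cons_val_one, Matrix.cons_val_fin_one,
    Nat.reduceSub]
  ring_nf
  positivity

theorem eval_Q_nonneg {t : ℝ} (ht : t ∈ Icc (-4/3) (-5/4)) : 0 ≤ Q.eval t := by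
  refine eval_nonneg_of_homogenize_nonneg (d := 8) (by unfold Q; compute_degree) (by norm_num)
    (fun u v hu hv => ?_) ht
  simp (disch := decide) only [Q, ← map_ofNat C,
    homogenize_add, homogenize_sub, homogenize_neg, homogenize_C_mul, homogenize_X_pow,
    homogenize_X, homogenize_C, map_add, map_sub, map_neg, map_mul, map_pow, MvPolynomial.eval_X,
    MvPolynomial.eval_C, Matrix.cons_val_zero, Matrix.cons_val_one, Matrix.cons_val_fin_one,
    Nat.reduceSub]
  ring_nf
  positivity

theorem eval_26_pos {t : ℝ} (ht : t ∈ Icc (-4/3) (-5/4)) : 0 < (Dpoly 26).eval t := by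
  refine eval_pos_of_homogenize_pos (d := 9)
    (by rw [eq_P_add_C_mul_Q]; unfold P Q; compute_degree) (by norm_num)
    (fun u v hu hv huv => ?_) ht
  simp (disch := decide) only [eq_P_add_C_mul_Q, P, Q, Nat.cast_ofNat, ← map_ofNat C,
    homogenize_add, homogenize_sub, homogenize_neg, homogenize_C_mul, homogenize_X_pow,
    homogenize_X, homogenize_C, map_add, map_sub, map_neg, map_mul, map_pow, MvPolynomial.eval_X,
    MvPolynomial.eval_C, Matrix.cons_val_zero, Matrix.cons_val_one, Matrix.cons_val_fin_one,
    Nat.reduceSub]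
  ring_nf
  rcases huv with huv | huv <;> positivity

theorem eval_wronskian_pos {t : ℝ} (ht : t ∈ Icc (-2) (-4/3)) : 0 < (wronskian Q P).eval t := by
  refine eval_pos_of_homogenize_pos (d := 16) (by rw [wronskian_Q_P]; compute_degree)
    (by norm_num) (fun u v hu hv huv => ?_) ht
  simp (disch := decide) only [wronskian_Q_P, ← map_ofNat C,
    homogenize_add, homogenize_sub, homogenize_neg, homogenize_C_mul, homogenize_X_pow,
    homogenize_X, homogenize_C, map_add, map_sub, map_neg, map_mul, map_pow, MvPolynomial.eval_X,
    MvPolynomial.eval_C, Matrix.cons_val_zero, Matrix.cons_val_one, Matrix.cons_val_fin_one,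
    Nat.reduceSub]
  ring_nf
  rcases huv with huv | huv <;> positivity

theorem eval_wronskian_neg {t : ℝ} (ht : t ∈ Icc (-5/4) (-1)) : (wronskian Q P).eval t < 0 := by
  have h := eval_pos_of_homogenize_pos (p := -wronskian Q P) (d := 16)
    (by rw [wronskian_Q_P]; compute_degree) (by norm_num) (fun u v hu hv huv => ?_) ht
  · simpa using h
  simp (disch := decide) only [wronskian_Q_P, ← map_ofNat C,
    homogenize_add, homogenize_sub, homogenize_neg, homogenize_C_mul, homogenize_X_pow,
    homogenize_X, homogenize_C, map_add, map_sub, map_neg, map_mul, map_pow, MvPolynomial.eval_X,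
    MvPolynomial.eval_C, Matrix.cons_val_zero, Matrix.cons_val_one, Matrix.cons_val_fin_one,
    Nat.reduceSub]
  ring_nf
  rcases huv with huv | huv <;> positivity

theorem eval_neg_of_eval_Q_nonpos (n : ℕ) {t : ℝ} (ht : t ≤ 0) (hQ : Q.eval t ≤ 0) :
    (Dpoly n).eval t < 0 := by
  rw [eval_eq]
  linarith [eval_P_neg ht, mul_nonpos_of_nonneg_of_nonpos (Nat.cast_nonneg (α := ℝ) n) hQ]

theorem eval_Q_pos_of_isRoot {n : ℕ} {t : ℝ} (ht : t ≤ 0) (hroot : (Dpoly n).IsRoot t) :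
    0 < Q.eval t := by
  by_contra! hQ
  exact (eval_neg_of_eval_Q_nonpos n ht hQ).ne hroot

theorem eval_pos {n : ℕ} (hn : 26 ≤ n) {t : ℝ} (ht : t ∈ Icc (-4/3) (-5/4)) :
    0 < (Dpoly n).eval t := by
  have h26 := eval_26_pos ht
  have hn' : (26 : ℝ) ≤ n := by exact_mod_cast hn
  rw [eval_eq] at h26 ⊢
  push_cast at h26
  nlinarith [eval_Q_nonneg ht]

theorem mem_Ioo_of_isRoot {n : ℕ} (hn : 26 ≤ n) {t : ℝ} (ht : t < 0)
    (hroot : (Dpoly n).IsRoot t) : t ∈ Ioo (-2) (-4/3) ∨ t ∈ Ioo (-5/4) (-1) := by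
  have hQ := eval_Q_pos_of_isRoot ht.le hroot
  have h₁ : -2 < t := by
    by_contra! h
    exact (eval_Q_neg h).not_gt hQ
  have h₂ : t < -1 := by
    by_contra! h
    exact (eval_Q_nonpos ⟨h, ht.le⟩).not_gt hQ
  have h₃ : t ∉ Icc (-4/3) (-5/4) := fun h => (eval_pos hn h).ne' hroot
  rw [mem_Icc, not_and_or, not_le, not_le] at h₃
  rcases h₃ with h₃ | h₃
  · exact Or.inl ⟨h₁, h₃⟩
  · exact Or.inr ⟨h₃, h₂⟩

theorem eval_derivative_pos_of_isRoot {n : ℕ} {t : ℝ} (ht : t ∈ Icc (-2) (-4/3))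
    (hroot : (Dpoly n).IsRoot t) : 0 < (Dpoly n).derivative.eval t := by
  have h := eval_mul_eval_derivative_of_isRoot (q := Q) hroot
  rw [wronskian_Q_eq] at h
  exact pos_of_mul_pos_right (h ▸ eval_wronskian_pos ht)
    (eval_Q_pos_of_isRoot (by linarith [ht.2]) hroot).le

theorem eval_derivative_neg_of_isRoot {n : ℕ} {t : ℝ} (ht : t ∈ Icc (-5/4) (-1))
    (hroot : (Dpoly n).IsRoot t) : (Dpoly n).derivative.eval t < 0 := by
  have h := eval_mul_eval_derivative_of_isRoot (q := Q) hroot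
  rw [wronskian_Q_eq] at h
  exact neg_of_mul_neg_right (h ▸ eval_wronskian_neg ht)
    (eval_Q_pos_of_isRoot (by linarith [ht.2]) hroot).le

theorem existsUnique_isRoot_Ioo_left {n : ℕ} (hn : 26 ≤ n) :
    ∃! r, r ∈ Ioo (-2) (-4/3) ∧ (Dpoly n).IsRoot r := by
  obtain ⟨r, hr, hroot⟩ := intermediate_value_Ioo (by norm_num) (Dpoly n).continuousOn
    ⟨eval_neg_of_eval_Q_nonpos n (by norm_num) (eval_Q_neg le_rfl).le,
      eval_pos hn ⟨le_rfl, by norm_num⟩⟩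
  have huniq := ordConnected_Icc.subsingleton_zeros_of_deriv_pos (Dpoly n).continuousOn
    fun x hx hroot => by rw [Polynomial.deriv]; exact eval_derivative_pos_of_isRoot hx hroot
  exact ⟨r, ⟨hr, hroot⟩, fun x hx => huniq ⟨Ioo_subset_Icc_self hx.1, hx.2⟩
    ⟨Ioo_subset_Icc_self hr, hroot⟩⟩

theorem existsUnique_isRoot_Ioo_right {n : ℕ} (hn : 26 ≤ n) :
    ∃! r, r ∈ Ioo (-5/4) (-1) ∧ (Dpoly n).IsRoot r := by
  obtain ⟨r, hr, hroot⟩ := intermediate_value_Ioo' (by norm_num) (Dpoly n).continuousOn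
    ⟨eval_neg_of_eval_Q_nonpos n (by norm_num) (eval_Q_nonpos ⟨le_rfl, by norm_num⟩),
      eval_pos hn ⟨by norm_num, le_rfl⟩⟩
  have huniq := ordConnected_Icc.subsingleton_zeros_of_deriv_neg (Dpoly n).continuousOn
    fun x hx hroot => by rw [Polynomial.deriv]; exact eval_derivative_neg_of_isRoot hx hroot
  exact ⟨r, ⟨hr, hroot⟩, fun x hx => huniq ⟨Ioo_subset_Icc_self hx.1, hx.2⟩
    ⟨Ioo_subset_Icc_self hr, hroot⟩⟩

end Dpoly

theorem stmt_6 (n : ℕ) (hn : 26 ≤ n) :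
    {t : ℝ | t < 0 ∧ (Dpoly n).IsRoot t}.ncard = 2 := by
  obtain ⟨r₁, ⟨hr₁, hroot₁⟩, huniq₁⟩ := Dpoly.existsUnique_isRoot_Ioo_left hn
  obtain ⟨r₂, ⟨hr₂, hroot₂⟩, huniq₂⟩ := Dpoly.existsUnique_isRoot_Ioo_right hn
  have hroots : {t : ℝ | t < 0 ∧ (Dpoly n).IsRoot t} = {r₁, r₂} := by
    ext t
    constructor
    · rintro ⟨ht, hroot⟩
      rcases Dpoly.mem_Ioo_of_isRoot hn ht hroot with h | h
      · exact Or.inl (huniq₁ t ⟨h, hroot⟩)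
      · exact Or.inr (huniq₂ t ⟨h, hroot⟩)
    · rintro (rfl | rfl)
      · exact ⟨by linarith [hr₁.2], hroot₁⟩
      · exact ⟨by linarith [hr₂.2], hroot₂⟩
  rw [hroots, ncard_pair (by linarith [hr₁.2, hr₂.1])]
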